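/- Let z = x + iy be a complex number with x ≠ 0, and define A(z) = (1/2)·(arctan((y+1)/x) − arctan((y−1)/x)) + (i/4)·ln((x²+(y−1)²)/(x²+(y+1)²)). Then cos(A(z)) = z·sin(A(z)), where sin and cos are the complex sine and cosine; that is, A(z) is a value of the inverse cotangent of z. Moreover, the function A is complex differentiable at z with derivative A′(z) = −1/(1+z²). -/

import Mathlib

/-!
On the half-planes `re w ≠ 0` the function `A` agrees with `arccot w = -(i/2) Log ((w + i)/(w - i))`.
Indeed `exp (i arctan t) = (1 + i t)/√(1 + t²)`, which gives `exp (2 i A w) = (w + i)/(w - i)`,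
and `Im (2 i A w)` is a difference of two arctangents, hence lies in `(-π, π)`, where the
principal logarithm inverts `exp`. The identity `cos = z sin` is then algebra in `exp (i A z)`.
Since `Im ((w + i)/(w - i)) = 2 Re w / |w - i|²` is nonzero, the quotient stays off the branch cut,
so `arccot` is differentiable there with derivative `-1/(1 + z²)`, and `A` agrees with it on the
open set `re w ≠ 0`.
-/

open Complex

/-- Closed-form expression `A(w)` for the principal branch of the inverse cotangent
away from the imaginary axis. -/
noncomputable def A (w : ℂ) : ℂ :=
  ((Real.arctan ((w.im + 1) / w.re) - Real.arctan ((w.im - 1) / w.re)) / 2 : ℝ) +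
    Complex.I / 4 *
      (Real.log ((w.re ^ 2 + (w.im - 1) ^ 2) / (w.re ^ 2 + (w.im + 1) ^ 2)) : ℝ)

noncomputable def arccot (w : ℂ) : ℂ := -(I / 2) * log ((w + I) / (w - I))

theorem cos_eq_mul_sin_of_exp_two_mul_I {a z : ℂ} (hz : z - I ≠ 0)
    (h : exp (2 * I * a) = (z + I) / (z - I)) : cos a = z * sin a := by
  have hsq : exp (a * I) ^ 2 * (z - I) = z + I := by
    rw [← exp_nat_mul, eq_div_iff hz] at *
    push_cast
    rwa [mul_comm _ I, ← mul_assoc]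
  rw [cos, sin, neg_mul, exp_neg]
  field_simp
  linear_combination I * hsq + (exp (a * I) ^ 2 + 1) * I_sq

theorem exp_two_mul_I_mul_arccot {w : ℂ} (hp : w + I ≠ 0) (hm : w - I ≠ 0) :
    exp (2 * I * arccot w) = (w + I) / (w - I) := by
  have h : 2 * I * arccot w = log ((w + I) / (w - I)) := by
    rw [arccot]
    linear_combination (-log ((w + I) / (w - I))) * I_sq
  rw [h, exp_log (div_ne_zero hp hm)]

theorem cos_arccot {w : ℂ} (hp : w + I ≠ 0) (hm : w - I ≠ 0) :
    cos (arccot w) = w * sin (arccot w) :=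
  cos_eq_mul_sin_of_exp_two_mul_I hm (exp_two_mul_I_mul_arccot hp hm)

theorem hasDerivAt_arccot {z : ℂ} (h : (z + I) / (z - I) ∈ slitPlane) :
    HasDerivAt arccot (-(1 / (1 + z ^ 2))) z := by
  have hq : (z + I) / (z - I) ≠ 0 := slitPlane_ne_zero h
  have hm : z - I ≠ 0 := fun h0 => hq (by rw [h0, div_zero])
  have hp : z + I ≠ 0 := fun h0 => hq (by rw [h0, zero_div])
  have hquot := ((hasDerivAt_id' z).add_const I).div ((hasDerivAt_id' z).sub_const I) hm
  refine (((hasDerivAt_log h).comp z hquot).const_mul (-(I / 2))).congr_deriv ?_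
  have hfactor : 1 + z ^ 2 = (z + I) * (z - I) := by linear_combination I_sq
  rw [hfactor]
  field_simp
  linear_combination 2 * I_sq

theorem im_add_I_div_sub_I (w : ℂ) : ((w + I) / (w - I)).im = 2 * w.re / normSq (w - I) := by
  rw [div_im]
  simp only [add_im, I_im, sub_re, I_re, sub_zero, add_re, add_zero, sub_im]
  ring

theorem add_I_div_sub_I_mem_slitPlane {w : ℂ} (hw : w.re ≠ 0) :
    (w + I) / (w - I) ∈ slitPlane := by
  have hm : w - I ≠ 0 := fun h => hw (by simpa using congrArg re h)
  rw [mem_slitPlane_iff, im_add_I_div_sub_I]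
  exact Or.inr (div_ne_zero (mul_ne_zero two_ne_zero hw) (normSq_pos.2 hm).ne')

theorem exp_arctan_mul_I (t : ℝ) :
    exp (Real.arctan t * I) = (1 + t * I) / (√(1 + t ^ 2) : ℝ) := by
  have hs : (√(1 + t ^ 2) : ℂ) ≠ 0 := by
    exact_mod_cast (Real.sqrt_pos.2 (by positivity)).ne'
  rw [exp_mul_I, ← ofReal_cos, ← ofReal_sin, Real.cos_arctan, Real.sin_arctan]
  push_cast
  field_simp

theorem Real.exp_neg_log_div_div_two {a b : ℝ} (ha : 0 < a) (hb : 0 < b) :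
    Real.exp (-Real.log (a / b) / 2) = √b / √a := by
  rw [Real.log_div ha.ne' hb.ne', ← Real.exp_log (Real.sqrt_pos.2 hb),
    ← Real.exp_log (Real.sqrt_pos.2 ha), ← Real.exp_sub, Real.log_sqrt hb.le,
    Real.log_sqrt ha.le]
  ring_nf

theorem two_mul_I_mul_A (w : ℂ) :
    2 * I * A w =
      (-Real.log ((w.re ^ 2 + (w.im - 1) ^ 2) / (w.re ^ 2 + (w.im + 1) ^ 2)) / 2 : ℝ) +
        (Real.arctan ((w.im + 1) / w.re) - Real.arctan ((w.im - 1) / w.re) : ℝ) * I := by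
  simp only [A]
  push_cast
  ring_nf
  rw [I_sq]
  ring

theorem exp_two_mul_I_mul_A {w : ℂ} (hw : w.re ≠ 0) :
    exp (2 * I * A w) = (w + I) / (w - I) := by
  have hratio : (w.re ^ 2 + (w.im - 1) ^ 2) / (w.re ^ 2 + (w.im + 1) ^ 2)
      = (1 + ((w.im - 1) / w.re) ^ 2) / (1 + ((w.im + 1) / w.re) ^ 2) := by
    field_simp
  have hquot : (1 + ((w.im + 1) / w.re : ℝ) * I) / (1 + ((w.im - 1) / w.re : ℝ) * I)
      = (w + I) / (w - I) := by
    have hx : (w.re : ℂ) ≠ 0 := ofReal_ne_zero.2 hw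
    have hm : (w.re : ℂ) + (w.im - 1) * I ≠ 0 := fun h => hw (by simpa using congrArg re h)
    conv_rhs => rw [← re_add_im w]
    push_cast
    field_simp
    ring
  rw [two_mul_I_mul_A, hratio, exp_add, ← ofReal_exp,
    Real.exp_neg_log_div_div_two (by positivity) (by positivity), ofReal_sub, sub_mul, exp_sub,
    exp_arctan_mul_I, exp_arctan_mul_I, ← hquot]
  generalize (w.im + 1) / w.re = t₁, (w.im - 1) / w.re = t₂
  have hs (t : ℝ) : (√(1 + t ^ 2) : ℂ) ≠ 0 := by
    exact_mod_cast (Real.sqrt_pos.2 (by positivity)).ne'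
  rw [ofReal_div]
  field_simp
  exact mul_div_mul_left _ _ (mul_ne_zero (hs t₁) (hs t₂))

theorem A_eq_arccot {w : ℂ} (hw : w.re ≠ 0) : A w = arccot w := by
  have him : (2 * I * A w).im
      = Real.arctan ((w.im + 1) / w.re) - Real.arctan ((w.im - 1) / w.re) := by
    rw [two_mul_I_mul_A]
    simp [-ofReal_arctan]
  have hlog : log ((w + I) / (w - I)) = 2 * I * A w := by
    rw [← exp_two_mul_I_mul_A hw, log_exp]
    all_goals
      linarith [Real.neg_pi_div_two_lt_arctan ((w.im + 1) / w.re),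
        Real.arctan_lt_pi_div_two ((w.im + 1) / w.re),
        Real.neg_pi_div_two_lt_arctan ((w.im - 1) / w.re),
        Real.arctan_lt_pi_div_two ((w.im - 1) / w.re)]
  rw [arccot, hlog]
  linear_combination A w * I_sq

theorem stmt18 (z : ℂ) (h : z.re ≠ 0) :
    Complex.cos (A z) = z * Complex.sin (A z) ∧
      HasDerivAt A (-(1 / (1 + z ^ 2))) z := by
  have hp : z + I ≠ 0 := fun h0 => h (by simpa using congrArg re h0)
  have hm : z - I ≠ 0 := fun h0 => h (by simpa using congrArg re h0)
  have hA : A =ᶠ[nhds z] arccot := by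
    filter_upwards [(isOpen_ne_fun continuous_re continuous_const).mem_nhds h] with w hw
    exact A_eq_arccot hw
  refine ⟨?_, ?_⟩
  · rw [A_eq_arccot h]
    exact cos_arccot hp hm
  · exact (hasDerivAt_arccot (add_I_div_sub_I_mem_slitPlane h)).congr_of_eventuallyEq hA
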